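/- The two-qubit state σ_AB with matrix entries σ₁₁ = a₀², σ₂₂ = a₁², σ₃₃ = σ₄₄ = b²/2, σ₁₄ = σ₄₁ = a₀b/√2, σ₂₃ = e^{it} a₁ b/√2, σ₃₂ = e^{−it} a₁ b/√2 (all other entries zero), with a₀² + a₁² + b² = 1, has partial transpose whose smallest eigenvalue is min over i≠j ∈ {0,1} of (1/4)(2aᵢ² + b² − √(4aᵢ⁴ + 8aⱼ²b² − 4aᵢ²b² + b⁴)). Consequently σ_AB is NPT (not positive partial transpose) whenever |b| ∈ (0,1) and |a₀| ≠ |a₁|. -/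

import Mathlib

open Matrix Polynomial ComplexOrder

/-- The two-qubit Choi state of a self-complementary qubit operation,
in the ordered basis {|00⟩,|01⟩,|10⟩,|11⟩}. -/
noncomputable def sigmaAB (a0 a1 b t : ℝ) :
    Matrix (Fin 2 × Fin 2) (Fin 2 × Fin 2) ℂ :=
  fun p q =>
    if p = (0,0) ∧ q = (0,0) then ((a0^2 : ℝ) : ℂ)
    else if p = (0,1) ∧ q = (0,1) then ((a1^2 : ℝ) : ℂ)
    else if (p = (1,0) ∧ q = (1,0)) ∨ (p = (1,1) ∧ q = (1,1)) then ((b^2/2 : ℝ) : ℂ)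
    else if (p = (0,0) ∧ q = (1,1)) ∨ (p = (1,1) ∧ q = (0,0)) then
      ((a0 * b / Real.sqrt 2 : ℝ) : ℂ)
    else if p = (0,1) ∧ q = (1,0) then
      Complex.exp (t * Complex.I) * ((a1 * b / Real.sqrt 2 : ℝ) : ℂ)
    else if p = (1,0) ∧ q = (0,1) then
      Complex.exp (-(t * Complex.I)) * ((a1 * b / Real.sqrt 2 : ℝ) : ℂ)
    else 0

/-- Partial transpose on the second qubit. -/
def ptranspose (M : Matrix (Fin 2 × Fin 2) (Fin 2 × Fin 2) ℂ) :
    Matrix (Fin 2 × Fin 2) (Fin 2 × Fin 2) ℂ :=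
  fun a b => M (a.1, b.2) (b.1, a.2)

/-- The candidate eigenvalue expression (1/4)(2aᵢ² + b² − √(4aᵢ⁴+8aⱼ²b²−4aᵢ²b²+b⁴)). -/
noncomputable def lamExpr (ai aj b : ℝ) : ℝ :=
  (1/4) * (2*ai^2 + b^2 - Real.sqrt (4*ai^4 + 8*aj^2*b^2 - 4*ai^2*b^2 + b^4))

lemma evalcp {n : Type*} [DecidableEq n] [Fintype n] (M : Matrix n n ℂ) (x : ℂ) :
    M.charpoly.eval x = (Matrix.diagonal (fun _ => x) - M).det := by
  rw [Matrix.charpoly, ← Polynomial.coe_evalRingHom, RingHom.map_det]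
  congr 1
  ext i j
  by_cases h : i = j
  · subst h; simp [charmatrix_apply_eq, Matrix.diagonal_apply_eq]
  · simp [charmatrix_apply_ne _ _ _ h, Matrix.diagonal_apply_ne _ h]

def e4 : Fin 2 × Fin 2 ≃ Fin 4 where
  toFun p := ⟨2 * p.1.val + p.2.val, by omega⟩
  invFun k := (⟨k.val / 2, by omega⟩, ⟨k.val % 2, by omega⟩)
  left_inv := by decide
  right_inv := by decide

lemma det4 (x p p1 q c c' r : ℂ) :
    (!![x-p, 0, 0, -c; 0, x-p1, -r, 0; 0, -r, x-q, 0; -c', 0, 0, x-q]).det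
      = ((x-p)*(x-q) - c*c') * ((x-p1)*(x-q) - r*r) := by
  rw [Matrix.det_succ_row_zero]
  simp [Fin.sum_univ_succ, Matrix.det_fin_three, show ((2:Fin 3).castSucc : Fin 4) = 2 from rfl,
    show ((1:Fin 3).castSucc : Fin 4) = 1 from rfl, show ((0:Fin 3).castSucc : Fin 4) = 0 from rfl,
    show Fin.succAbove (3:Fin 4) (2:Fin 3) = 2 from rfl]
  ring

set_option maxHeartbeats 2000000 in
lemma key (a0 a1 b t : ℝ) (x : ℂ) :
    Polynomial.eval x (ptranspose (sigmaAB a0 a1 b t)).charpoly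
      = ((x - ((a0^2:ℝ):ℂ))*(x - ((b^2/2:ℝ):ℂ)) - ((a1^2*b^2/2 : ℝ):ℂ)) *
        ((x - ((a1^2:ℝ):ℂ))*(x - ((b^2/2:ℝ):ℂ)) - ((a0^2*b^2/2 : ℝ):ℂ)) := by
  rw [evalcp, ← Matrix.det_reindex_self e4]
  have hM : Matrix.reindex e4 e4 (Matrix.diagonal (fun _ => x) - ptranspose (sigmaAB a0 a1 b t))
      = !![x - ((a0^2:ℝ):ℂ), 0, 0, -(Complex.exp (t*Complex.I) * ((a1*b/Real.sqrt 2 : ℝ):ℂ));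
           0, x - ((a1^2:ℝ):ℂ), -((a0*b/Real.sqrt 2 : ℝ):ℂ), 0;
           0, -((a0*b/Real.sqrt 2 : ℝ):ℂ), x - ((b^2/2:ℝ):ℂ), 0;
           -(Complex.exp (-(t*Complex.I)) * ((a1*b/Real.sqrt 2 : ℝ):ℂ)), 0, 0, x - ((b^2/2:ℝ):ℂ)] := by
    ext i j
    fin_cases i <;> fin_cases j <;>
      norm_num [e4, ptranspose, sigmaAB, Matrix.diagonal_apply, Prod.ext_iff, Fin.ext_iff]
  rw [hM, det4]
  have hsq : Real.sqrt 2 * Real.sqrt 2 = 2 := Real.mul_self_sqrt (by norm_num)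
  have hw : (a1*b/Real.sqrt 2) * (a1*b/Real.sqrt 2) = a1^2*b^2/2 := by
    rw [div_mul_div_comm, hsq]; ring
  have hr : (a0*b/Real.sqrt 2) * (a0*b/Real.sqrt 2) = a0^2*b^2/2 := by
    rw [div_mul_div_comm, hsq]; ring
  have hexp : Complex.exp (t*Complex.I) * Complex.exp (-(t*Complex.I)) = 1 := by
    rw [← Complex.exp_add]; simp
  have h1 : (Complex.exp (t*Complex.I) * ((a1*b/Real.sqrt 2 : ℝ):ℂ)) *
      (Complex.exp (-(t*Complex.I)) * ((a1*b/Real.sqrt 2 : ℝ):ℂ)) = ((a1^2*b^2/2 : ℝ):ℂ) := by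
    have : ((a1*b/Real.sqrt 2 : ℝ):ℂ) * ((a1*b/Real.sqrt 2 : ℝ):ℂ) = ((a1^2*b^2/2 : ℝ):ℂ) := by
      rw [← Complex.ofReal_mul, hw]
    calc (Complex.exp (t*Complex.I) * ((a1*b/Real.sqrt 2 : ℝ):ℂ)) *
        (Complex.exp (-(t*Complex.I)) * ((a1*b/Real.sqrt 2 : ℝ):ℂ))
        = (Complex.exp (t*Complex.I) * Complex.exp (-(t*Complex.I))) *
          (((a1*b/Real.sqrt 2 : ℝ):ℂ) * ((a1*b/Real.sqrt 2 : ℝ):ℂ)) := by ring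
      _ = _ := by rw [hexp, this, one_mul]
  have h2 : ((a0*b/Real.sqrt 2 : ℝ):ℂ) * ((a0*b/Real.sqrt 2 : ℝ):ℂ) = ((a0^2*b^2/2 : ℝ):ℂ) := by
    rw [← Complex.ofReal_mul, hr]
  rw [h1, h2]

lemma hD_nonneg (ai aj b : ℝ) : (0:ℝ) ≤ 4*ai^4 + 8*aj^2*b^2 - 4*ai^2*b^2 + b^4 := by
  nlinarith [sq_nonneg (2*ai^2 - b^2), sq_nonneg (aj*b)]

lemma lam_root (ai aj b : ℝ) :
    (lamExpr ai aj b - ai^2) * (lamExpr ai aj b - b^2/2) - aj^2*b^2/2 = 0 := by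
  have hr2 : Real.sqrt (4*ai^4 + 8*aj^2*b^2 - 4*ai^2*b^2 + b^4) ^ 2
      = 4*ai^4 + 8*aj^2*b^2 - 4*ai^2*b^2 + b^4 := Real.sq_sqrt (hD_nonneg ai aj b)
  unfold lamExpr
  linear_combination (1/16) * hr2

lemma lam_min (ai aj b x : ℝ) (hx : (x - ai^2)*(x - b^2/2) - aj^2*b^2/2 = 0) :
    lamExpr ai aj b ≤ x := by
  set r := Real.sqrt (4*ai^4 + 8*aj^2*b^2 - 4*ai^2*b^2 + b^4) with hrdef
  have hr2 : r ^ 2 = 4*ai^4 + 8*aj^2*b^2 - 4*ai^2*b^2 + b^4 := Real.sq_sqrt (hD_nonneg ai aj b)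
  have hr0 : 0 ≤ r := Real.sqrt_nonneg _
  have hfac : (x - (2*ai^2+b^2 - r)/4) * (x - (2*ai^2+b^2 + r)/4) = 0 := by
    linear_combination hx - (1/16) * hr2
  have hlam : lamExpr ai aj b = (2*ai^2+b^2 - r)/4 := by unfold lamExpr; rw [← hrdef]; ring
  rcases mul_eq_zero.1 hfac with h | h
  · rw [hlam]; linarith [sub_eq_zero.1 h]
  · rw [hlam]; linarith [sub_eq_zero.1 h]

lemma qf1 (a0 a1 b t : ℝ) :
    star (fun p : Fin 2 × Fin 2 => if p = (0,0) then ((b^2/2 : ℝ):ℂ)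
      else if p = (1,1) then -(Complex.exp (-(t*Complex.I)) * ((a1*b/Real.sqrt 2 : ℝ):ℂ)) else 0)
    ⬝ᵥ (ptranspose (sigmaAB a0 a1 b t)) *ᵥ (fun p : Fin 2 × Fin 2 => if p = (0,0) then ((b^2/2 : ℝ):ℂ)
      else if p = (1,1) then -(Complex.exp (-(t*Complex.I)) * ((a1*b/Real.sqrt 2 : ℝ):ℂ)) else 0)
    = ((b^2/2 * (a0^2*b^2/2 - a1^2*b^2/2) : ℝ) : ℂ) := by
  have hexp : Complex.exp (t*Complex.I) * Complex.exp (-(t*Complex.I)) = 1 := by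
    rw [← Complex.exp_add]; simp
  have hsq : Real.sqrt 2 * Real.sqrt 2 = 2 := Real.mul_self_sqrt (by norm_num)
  simp only [dotProduct, Matrix.mulVec, Fintype.sum_prod_type, Fin.sum_univ_two,
    Pi.star_apply, ptranspose, sigmaAB]
  norm_num [Prod.ext_iff, Fin.ext_iff, ← Complex.exp_conj, Complex.conj_ofReal, mul_comm]
  left
  have hsqC : ((Real.sqrt 2:ℝ):ℂ) * ((Real.sqrt 2:ℝ):ℂ) = 2 := by
    rw [← Complex.ofReal_mul, hsq]; norm_num
  have hexp' : Complex.exp (Complex.I*(t:ℂ)) * Complex.exp (-(Complex.I*(t:ℂ))) = 1 := by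
    rw [← Complex.exp_add]; simp
  rw [show Complex.exp (Complex.I*(t:ℂ)) * ((a1:ℂ) * (b:ℂ) / ((Real.sqrt 2:ℝ):ℂ)) *
      (Complex.exp (-(Complex.I*(t:ℂ))) * ((a1:ℂ) * (b:ℂ) / ((Real.sqrt 2:ℝ):ℂ)))
      = (Complex.exp (Complex.I*(t:ℂ)) * Complex.exp (-(Complex.I*(t:ℂ)))) *
        (((a1:ℂ) * (b:ℂ) * ((a1:ℂ) * (b:ℂ))) / (((Real.sqrt 2:ℝ):ℂ) * ((Real.sqrt 2:ℝ):ℂ)))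
      from by ring, hexp', hsqC, one_mul]
  ring

lemma qf2 (a0 a1 b t : ℝ) :
    star (fun p : Fin 2 × Fin 2 => if p = (0,1) then ((b^2/2 : ℝ):ℂ)
      else if p = (1,0) then -((a0*b/Real.sqrt 2 : ℝ):ℂ) else 0)
    ⬝ᵥ (ptranspose (sigmaAB a0 a1 b t)) *ᵥ (fun p : Fin 2 × Fin 2 => if p = (0,1) then ((b^2/2 : ℝ):ℂ)
      else if p = (1,0) then -((a0*b/Real.sqrt 2 : ℝ):ℂ) else 0)
    = ((b^2/2 * (a1^2*b^2/2 - a0^2*b^2/2) : ℝ) : ℂ) := by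
  have hsq : Real.sqrt 2 * Real.sqrt 2 = 2 := Real.mul_self_sqrt (by norm_num)
  simp only [dotProduct, Matrix.mulVec, Fintype.sum_prod_type, Fin.sum_univ_two,
    Pi.star_apply, ptranspose, sigmaAB]
  norm_num [Prod.ext_iff, Fin.ext_iff, Complex.conj_ofReal, mul_comm]
  left
  have hsqC : ((Real.sqrt 2:ℝ):ℂ) * ((Real.sqrt 2:ℝ):ℂ) = 2 := by
    rw [← Complex.ofReal_mul, hsq]; norm_num
  rw [show (a0:ℂ) * (b:ℂ) / ((Real.sqrt 2:ℝ):ℂ) * ((a0:ℂ) * (b:ℂ) / ((Real.sqrt 2:ℝ):ℂ))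
      = ((a0:ℂ) * (b:ℂ) * ((a0:ℂ) * (b:ℂ))) / (((Real.sqrt 2:ℝ):ℂ) * ((Real.sqrt 2:ℝ):ℂ))
      from by ring, hsqC]
  ring

/-- The smallest eigenvalue of σ_AB^Γ is min over i≠j of lamExpr, and σ_AB is NPT
whenever |b| ∈ (0,1) and |a₀| ≠ |a₁|. -/
theorem stmt10 (a0 a1 b t : ℝ)
    (ha0 : a0 ∈ Set.Icc (-1:ℝ) 1) (ha1 : a1 ∈ Set.Icc (-1:ℝ) 1)
    (hb : b ∈ Set.Icc (-1:ℝ) 1) (ht : t ∈ Set.Icc (0:ℝ) (2*Real.pi))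
    (hnorm : a0^2 + a1^2 + b^2 = 1) :
    ((ptranspose (sigmaAB a0 a1 b t)).charpoly.IsRoot
        ((min (lamExpr a0 a1 b) (lamExpr a1 a0 b) : ℝ) : ℂ)) ∧
    (∀ x : ℝ, (ptranspose (sigmaAB a0 a1 b t)).charpoly.IsRoot (x : ℂ) →
        min (lamExpr a0 a1 b) (lamExpr a1 a0 b) ≤ x) ∧
    (|b| ∈ Set.Ioo (0:ℝ) 1 → |a0| ≠ |a1| →
        ¬ (ptranspose (sigmaAB a0 a1 b t)).PosSemidef) := by
  have keyR : ∀ x : ℝ, Polynomial.eval ((x:ℝ):ℂ) (ptranspose (sigmaAB a0 a1 b t)).charpoly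
      = ((((x - a0^2)*(x - b^2/2) - a1^2*b^2/2) * ((x - a1^2)*(x - b^2/2) - a0^2*b^2/2) : ℝ) : ℂ) := by
    intro x; rw [key]; push_cast; ring
  refine ⟨?_, ?_, ?_⟩
  · rw [Polynomial.IsRoot, keyR, Complex.ofReal_eq_zero]
    rcases le_total (lamExpr a0 a1 b) (lamExpr a1 a0 b) with h | h
    · rw [min_eq_left h, lam_root a0 a1 b, zero_mul]
    · rw [min_eq_right h, mul_eq_zero]; right; exact lam_root a1 a0 b
  · intro x hx
    rw [Polynomial.IsRoot, keyR, Complex.ofReal_eq_zero, mul_eq_zero] at hx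
    rcases hx with h | h
    · exact le_trans (min_le_left _ _) (lam_min a0 a1 b x h)
    · exact le_trans (min_le_right _ _) (lam_min a1 a0 b x h)
  · rintro ⟨hb0, hb1⟩ hne hPSD
    have hbne : b ≠ 0 := fun h => by simp [h] at hb0
    have hb2 : 0 < b^2 := by positivity
    rcases hne.lt_or_gt with h | h
    · have h2 : a0^2 < a1^2 := by
        rw [← sq_abs a0, ← sq_abs a1]; nlinarith [abs_nonneg a0]
      have hq := hPSD.dotProduct_mulVec_nonneg (fun p : Fin 2 × Fin 2 => if p = (0,0) then ((b^2/2 : ℝ):ℂ)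
        else if p = (1,1) then -(Complex.exp (-(t*Complex.I)) * ((a1*b/Real.sqrt 2 : ℝ):ℂ)) else 0)
      rw [qf1, ← Complex.ofReal_zero, Complex.real_le_real] at hq
      nlinarith [hq, mul_pos hb2 hb2, h2]
    · have h2 : a1^2 < a0^2 := by
        rw [← sq_abs a0, ← sq_abs a1]; nlinarith [abs_nonneg a1]
      have hq := hPSD.dotProduct_mulVec_nonneg (fun p : Fin 2 × Fin 2 => if p = (0,1) then ((b^2/2 : ℝ):ℂ)
        else if p = (1,0) then -((a0*b/Real.sqrt 2 : ℝ):ℂ) else 0)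
      rw [qf2, ← Complex.ofReal_zero, Complex.real_le_real] at hq
      nlinarith [hq, mul_pos hb2 hb2, h2]
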